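/- arXiv:1310.8556 — 3 statements merged into one kernel-verified Lean document; each statement's English description precedes it below -/
import Mathlib

section
/- For every integer k ≥ 2, every positive integer n, every index 1 ≤ i ≤ k, and all integers m_1, …, m_k, the count D_k has the mirror symmetry D_k(m_1, …, m_i, …, m_k; n) = D_k(m_1, …, −m_i, …, m_k; n). -/
open PowerSeries

/-- A `k`-marked Durfee symbol of `n`.  The index `i : Fin k` corresponds to the pair
`(α^(i+1), β^(i+1))` of partitions (so index `0` is the rightmost pair `(α^1, β^1)`);
partitions are recorded as multisets of positive integers, with `Multiset.sup` the largest
part, `Multiset.card` the number of parts and `Multiset.sum` the size. -/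
structure MarkedDurfeeSymbol (k n : ℕ) where
  alpha : Fin k → Multiset ℕ
  beta : Fin k → Multiset ℕ
  dur : ℕ
  dur_pos : 0 < dur
  alpha_parts_pos : ∀ i, ∀ x ∈ alpha i, 0 < x
  beta_parts_pos : ∀ i, ∀ x ∈ beta i, 0 < x
  /-- `α^i` is nonempty for `1 ≤ i < k` (while `α^k` and all `β^i` may be empty). -/
  alpha_ne : ∀ i : Fin k, (i : ℕ) + 1 < k → alpha i ≠ 0
  /-- largest part of `β^i` is at most the largest part of `α^i`, for `1 ≤ i < k`. -/
  beta_le_alpha : ∀ i : Fin k, (i : ℕ) + 1 < k → (beta i).sup ≤ (alpha i).sup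
  /-- the largest part of `α^i` is at most the smallest part of `α^(i+1)`. -/
  alpha_le_alpha : ∀ i j : Fin k, (i : ℕ) + 1 = (j : ℕ) → ∀ x ∈ alpha j, (alpha i).sup ≤ x
  /-- the largest part of `α^i` is at most the smallest part of `β^(i+1)`. -/
  alpha_le_beta : ∀ i j : Fin k, (i : ℕ) + 1 = (j : ℕ) → ∀ x ∈ beta j, (alpha i).sup ≤ x
  /-- the largest part of `α^k` is at most `D`. -/
  alpha_le_dur : ∀ i : Fin k, (i : ℕ) + 1 = k → (alpha i).sup ≤ dur
  /-- the largest part of `β^k` is at most `D`. -/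
  beta_le_dur : ∀ i : Fin k, (i : ℕ) + 1 = k → (beta i).sup ≤ dur
  /-- `Σᵢ (|α^i| + |β^i|) + D² = n`. -/
  sum_eq : (∑ i, ((alpha i).sum + (beta i).sum)) + dur ^ 2 = n

/-- The `i`-th rank of a marked Durfee symbol:
`ℓ(α^i) - ℓ(β^i) - 1` for `i < k`, and `ℓ(α^k) - ℓ(β^k)` for `i = k`. -/
def MarkedDurfeeSymbol.rank {k n : ℕ} (τ : MarkedDurfeeSymbol k n) (i : Fin k) : ℤ :=
  if (i : ℕ) + 1 = k then ((τ.alpha i).card : ℤ) - ((τ.beta i).card : ℤ)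
  else ((τ.alpha i).card : ℤ) - ((τ.beta i).card : ℤ) - 1

/-- `D_k(m_1,…,m_k;n)`: the number of `k`-marked Durfee symbols of `n` whose `i`-th rank
equals `m i` for every `i`. -/
noncomputable def durfeeCount (k : ℕ) (m : Fin k → ℤ) (n : ℕ) : ℕ :=
  Nat.card {τ : MarkedDurfeeSymbol k n // ∀ i, τ.rank i = m i}

lemma multiset_sup_mem {s : Multiset ℕ} (h : s ≠ 0) : s.sup ∈ s := by
  induction s using Multiset.induction with
  | empty => simp at h
  | cons a t ih =>
    rw [Multiset.sup_cons]
    rcases eq_or_ne t 0 with rfl | ht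
    · simp
    · rcases le_total a t.sup with h1 | h1
      · rw [sup_eq_right.mpr h1]
        exact Multiset.mem_cons_of_mem (ih ht)
      · rw [sup_eq_left.mpr h1]
        exact Multiset.mem_cons_self a t

namespace MarkedDurfeeSymbol

variable {k n : ℕ}

lemma ext' {τ σ : MarkedDurfeeSymbol k n} (h1 : τ.alpha = σ.alpha)
    (h2 : τ.beta = σ.beta) (h3 : τ.dur = σ.dur) : τ = σ := by
  cases τ; cases σ; simp_all


/-- The rank-flipping involution at index `i`. -/
def flip (i : Fin k) (τ : MarkedDurfeeSymbol k n) : MarkedDurfeeSymbol k n where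
  alpha := Function.update τ.alpha i
    (if (i : ℕ) + 1 = k then τ.beta i else (τ.alpha i).sup ::ₘ τ.beta i)
  beta := Function.update τ.beta i
    (if (i : ℕ) + 1 = k then τ.alpha i else (τ.alpha i).erase (τ.alpha i).sup)
  dur := τ.dur
  dur_pos := τ.dur_pos
  alpha_parts_pos := by
    intro j x hx
    rcases eq_or_ne j i with rfl | hj
    · rw [Function.update_self] at hx
      split at hx
      · exact τ.beta_parts_pos j x hx
      · next h =>
        rcases Multiset.mem_cons.mp hx with rfl | hx
        · exact τ.alpha_parts_pos j _
            (multiset_sup_mem (τ.alpha_ne j (lt_of_le_of_ne j.isLt h)))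
        · exact τ.beta_parts_pos j x hx
    · rw [Function.update_of_ne hj] at hx
      exact τ.alpha_parts_pos j x hx
  beta_parts_pos := by
    intro j x hx
    rcases eq_or_ne j i with rfl | hj
    · rw [Function.update_self] at hx
      split at hx
      · exact τ.alpha_parts_pos j x hx
      · exact τ.alpha_parts_pos j x (Multiset.mem_of_mem_erase hx)
    · rw [Function.update_of_ne hj] at hx
      exact τ.beta_parts_pos j x hx
  alpha_ne := by
    intro j hj
    rcases eq_or_ne j i with rfl | hjne
    · rw [Function.update_self, if_neg (Nat.ne_of_lt hj)]
      exact Multiset.cons_ne_zero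
    · rw [Function.update_of_ne hjne]
      exact τ.alpha_ne j hj
  beta_le_alpha := by
    intro j hj
    rcases eq_or_ne j i with rfl | hjne
    · rw [Function.update_self, Function.update_self, if_neg (Nat.ne_of_lt hj),
        if_neg (Nat.ne_of_lt hj)]
      refine Multiset.sup_le.mpr fun b hb => ?_
      exact le_trans (Multiset.le_sup (Multiset.mem_of_mem_erase hb))
        (Multiset.le_sup (Multiset.mem_cons_self _ _))
    · rw [Function.update_of_ne hjne, Function.update_of_ne hjne]
      exact τ.beta_le_alpha j hj
  alpha_le_alpha := by
    intro j j' hjj' x hx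
    have hne : j ≠ j' := by
      intro h; rw [h] at hjj'; omega
    rcases eq_or_ne j' i with rfl | h2
    · rw [Function.update_of_ne hne]
      rw [Function.update_self] at hx
      split at hx
      · exact τ.alpha_le_beta j j' hjj' x hx
      · next h =>
        rcases Multiset.mem_cons.mp hx with rfl | hx
        · exact τ.alpha_le_alpha j j' hjj' _
            (multiset_sup_mem (τ.alpha_ne j' (lt_of_le_of_ne j'.isLt h)))
        · exact τ.alpha_le_beta j j' hjj' x hx
    · rw [Function.update_of_ne h2] at hx
      rcases eq_or_ne j i with rfl | h1
      · have hlt : (j : ℕ) + 1 < k := by rw [hjj']; exact j'.isLt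
        rw [Function.update_self, if_neg (Nat.ne_of_lt hlt), Multiset.sup_cons]
        exact sup_le (τ.alpha_le_alpha j j' hjj' x hx)
          (le_trans (τ.beta_le_alpha j hlt) (τ.alpha_le_alpha j j' hjj' x hx))
      · rw [Function.update_of_ne h1]
        exact τ.alpha_le_alpha j j' hjj' x hx
  alpha_le_beta := by
    intro j j' hjj' x hx
    have hne : j ≠ j' := by
      intro h; rw [h] at hjj'; omega
    rcases eq_or_ne j' i with rfl | h2
    · rw [Function.update_of_ne hne]
      rw [Function.update_self] at hx
      split at hx
      · exact τ.alpha_le_alpha j j' hjj' x hx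
      · exact τ.alpha_le_alpha j j' hjj' x (Multiset.mem_of_mem_erase hx)
    · rw [Function.update_of_ne h2] at hx
      rcases eq_or_ne j i with rfl | h1
      · have hlt : (j : ℕ) + 1 < k := by rw [hjj']; exact j'.isLt
        rw [Function.update_self, if_neg (Nat.ne_of_lt hlt), Multiset.sup_cons]
        exact sup_le (τ.alpha_le_beta j j' hjj' x hx)
          (le_trans (τ.beta_le_alpha j hlt) (τ.alpha_le_beta j j' hjj' x hx))
      · rw [Function.update_of_ne h1]
        exact τ.alpha_le_beta j j' hjj' x hx
  alpha_le_dur := by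
    intro j hj
    rcases eq_or_ne j i with rfl | hjne
    · rw [Function.update_self, if_pos hj]
      exact τ.beta_le_dur j hj
    · rw [Function.update_of_ne hjne]
      exact τ.alpha_le_dur j hj
  beta_le_dur := by
    intro j hj
    rcases eq_or_ne j i with rfl | hjne
    · rw [Function.update_self, if_pos hj]
      exact τ.alpha_le_dur j hj
    · rw [Function.update_of_ne hjne]
      exact τ.beta_le_dur j hj
  sum_eq := by
    have key : ∀ j : Fin k,
        (Function.update τ.alpha i
          (if (i : ℕ) + 1 = k then τ.beta i else (τ.alpha i).sup ::ₘ τ.beta i) j).sum +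
        (Function.update τ.beta i
          (if (i : ℕ) + 1 = k then τ.alpha i else (τ.alpha i).erase (τ.alpha i).sup) j).sum
        = (τ.alpha j).sum + (τ.beta j).sum := by
      intro j
      rcases eq_or_ne j i with rfl | hjne
      · rw [Function.update_self, Function.update_self]
        split
        · exact add_comm _ _
        · next h =>
          have hmem : (τ.alpha j).sup ∈ τ.alpha j :=
            multiset_sup_mem (τ.alpha_ne j (lt_of_le_of_ne j.isLt h))
          have := Multiset.cons_erase hmem
          calc ((τ.alpha j).sup ::ₘ τ.beta j).sum + ((τ.alpha j).erase (τ.alpha j).sup).sum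
              = ((τ.alpha j).sup ::ₘ ((τ.alpha j).erase (τ.alpha j).sup)).sum + (τ.beta j).sum := by
                rw [Multiset.sum_cons, Multiset.sum_cons]; ring
            _ = (τ.alpha j).sum + (τ.beta j).sum := by rw [this]
      · rw [Function.update_of_ne hjne, Function.update_of_ne hjne]
    rw [Finset.sum_congr rfl fun j _ => key j]
    exact τ.sum_eq

lemma flip_alpha (i : Fin k) (τ : MarkedDurfeeSymbol k n) :
    (flip i τ).alpha = Function.update τ.alpha i
      (if (i : ℕ) + 1 = k then τ.beta i else (τ.alpha i).sup ::ₘ τ.beta i) := rfl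

lemma flip_beta (i : Fin k) (τ : MarkedDurfeeSymbol k n) :
    (flip i τ).beta = Function.update τ.beta i
      (if (i : ℕ) + 1 = k then τ.alpha i else (τ.alpha i).erase (τ.alpha i).sup) := rfl

lemma rank_flip (i : Fin k) (τ : MarkedDurfeeSymbol k n) (j : Fin k) :
    (flip i τ).rank j = if j = i then -(τ.rank j) else τ.rank j := by
  rcases eq_or_ne j i with rfl | hjne
  · rw [if_pos rfl]
    by_cases htop : (j : ℕ) + 1 = k
    · have hA : (flip j τ).alpha j = τ.beta j := by
        rw [flip_alpha, Function.update_self, if_pos htop]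
      have hB : (flip j τ).beta j = τ.alpha j := by
        rw [flip_beta, Function.update_self, if_pos htop]
      simp only [rank, if_pos htop, hA, hB]
      ring
    · have hmem : (τ.alpha j).sup ∈ τ.alpha j :=
        multiset_sup_mem (τ.alpha_ne j (lt_of_le_of_ne j.isLt htop))
      have hc : 1 ≤ Multiset.card (τ.alpha j) := Multiset.card_pos.mpr
        (τ.alpha_ne j (lt_of_le_of_ne j.isLt htop))
      have hA : (flip j τ).alpha j = (τ.alpha j).sup ::ₘ τ.beta j := by
        rw [flip_alpha, Function.update_self, if_neg htop]
      have hB : (flip j τ).beta j = (τ.alpha j).erase (τ.alpha j).sup := by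
        rw [flip_beta, Function.update_self, if_neg htop]
      simp only [rank, if_neg htop, hA, hB, Multiset.card_cons,
        Multiset.card_erase_of_mem hmem]
      rw [Nat.pred_eq_sub_one]
      omega
  · rw [if_neg hjne]
    simp only [rank, flip_alpha, flip_beta, Function.update_of_ne hjne]

lemma flip_flip (i : Fin k) (τ : MarkedDurfeeSymbol k n) : flip i (flip i τ) = τ := by
  by_cases htop : (i : ℕ) + 1 = k
  · have hA : (flip i τ).alpha i = τ.beta i := by
      rw [flip_alpha, Function.update_self, if_pos htop]
    have hB : (flip i τ).beta i = τ.alpha i := by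
      rw [flip_beta, Function.update_self, if_pos htop]
    refine ext' ?_ ?_ rfl
    · funext j
      rcases eq_or_ne j i with rfl | hjne
      · rw [flip_alpha, Function.update_self, if_pos htop, hB]
      · rw [flip_alpha, Function.update_of_ne hjne, flip_alpha,
          Function.update_of_ne hjne]
    · funext j
      rcases eq_or_ne j i with rfl | hjne
      · rw [flip_beta, Function.update_self, if_pos htop, hA]
      · rw [flip_beta, Function.update_of_ne hjne, flip_beta,
          Function.update_of_ne hjne]
  · have hlt : (i : ℕ) + 1 < k := lt_of_le_of_ne i.isLt htop
    have hmem : (τ.alpha i).sup ∈ τ.alpha i := multiset_sup_mem (τ.alpha_ne i hlt)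
    have hA : (flip i τ).alpha i = (τ.alpha i).sup ::ₘ τ.beta i := by
      rw [flip_alpha, Function.update_self, if_neg htop]
    have hB : (flip i τ).beta i = (τ.alpha i).erase (τ.alpha i).sup := by
      rw [flip_beta, Function.update_self, if_neg htop]
    have hsup : ((flip i τ).alpha i).sup = (τ.alpha i).sup := by
      rw [hA, Multiset.sup_cons]
      exact sup_eq_left.mpr (τ.beta_le_alpha i hlt)
    refine ext' ?_ ?_ rfl
    · funext j
      rcases eq_or_ne j i with rfl | hjne
      · rw [flip_alpha, Function.update_self, if_neg htop, hsup, hB]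
        exact Multiset.cons_erase hmem
      · rw [flip_alpha, Function.update_of_ne hjne, flip_alpha,
          Function.update_of_ne hjne]
    · funext j
      rcases eq_or_ne j i with rfl | hjne
      · rw [flip_beta, Function.update_self, if_neg htop, hsup, hA]
        exact Multiset.erase_cons_head _ _
      · rw [flip_beta, Function.update_of_ne hjne, flip_beta,
          Function.update_of_ne hjne]

end MarkedDurfeeSymbol

/-- Mirror symmetry: `D_k(m_1,…,m_i,…,m_k;n) = D_k(m_1,…,-m_i,…,m_k;n)`. -/
theorem durfeeCount_update_neg (k : ℕ) (hk : 2 ≤ k) (n : ℕ) (hn : 0 < n)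
    (i : Fin k) (m : Fin k → ℤ) :
    durfeeCount k (Function.update m i (-(m i))) n = durfeeCount k m n := by
  apply Nat.card_congr
  refine
    { toFun := fun τ => ⟨MarkedDurfeeSymbol.flip i τ.1, ?_⟩
      invFun := fun τ => ⟨MarkedDurfeeSymbol.flip i τ.1, ?_⟩
      left_inv := fun τ => Subtype.ext (MarkedDurfeeSymbol.flip_flip i τ.1)
      right_inv := fun τ => Subtype.ext (MarkedDurfeeSymbol.flip_flip i τ.1) }
  · intro j
    rw [MarkedDurfeeSymbol.rank_flip]
    rcases eq_or_ne j i with rfl | hjne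
    · rw [if_pos rfl, τ.2 j, Function.update_self]; ring
    · rw [if_neg hjne, τ.2 j, Function.update_of_ne hjne]
  · intro j
    rw [MarkedDurfeeSymbol.rank_flip]
    rcases eq_or_ne j i with rfl | hjne
    · rw [if_pos rfl, τ.2 j, Function.update_self]
    · rw [if_neg hjne, τ.2 j, Function.update_of_ne hjne]
end

section
/- For every integer k ≥ 1 and every nonnegative integer n, the number of tuples (m_1, m_2, …, m_{k+1}, t_1, …, t_k) with m_1 a positive integer, each m_i (2 ≤ i ≤ k+1) an integer, and each t_i a nonnegative integer satisfying m_1 + |m_2| + ⋯ + |m_{k+1}| + 2t_1 + ⋯ + 2t_k = n is equal to binom(n + 2k − 1, 2k). -/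
/-!
Split each `mᵢ` into its positive and negative parts and add `tᵢ` to both:
`(m, t) ↦ (t + m⁺, t + m⁻)` is a bijection `ℤ × ℕ ≃ ℕ × ℕ` turning `|m| + 2t` into the sum of
the two coordinates. Together with `m₁ - 1`, a solution for `n` thus becomes a composition of
`n - 1` into `2k + 1` nonnegative parts, and stars and bars counts `binom(n - 1 + 2k, 2k)` of them.
-/

namespace Int

def prodNatEquivNatProd : ℤ × ℕ ≃ ℕ × ℕ where
  toFun x := (x.2 + x.1.toNat, x.2 + (-x.1).toNat)
  invFun y := (y.1 - y.2, min y.1 y.2)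
  left_inv := by rintro ⟨m, t⟩; ext <;> dsimp only <;> omega
  right_inv := by rintro ⟨a, b⟩; ext <;> dsimp only <;> omega

theorem prodNatEquivNatProd_add (x : ℤ × ℕ) :
    ((prodNatEquivNatProd x).1 + (prodNatEquivNatProd x).2 : ℤ) = |x.1| + 2 * x.2 := by
  obtain ⟨m, t⟩ := x
  simp only [prodNatEquivNatProd, Equiv.coe_fn_mk]
  rcases abs_cases m with ⟨h, _⟩ | ⟨h, _⟩ <;> omega

theorem sum_prodNatEquivNatProd_add {ι : Type*} [Fintype ι] (m : ι → ℤ) (t : ι → ℕ) :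
    ∑ i, ((prodNatEquivNatProd (m i, t i)).1 : ℤ) + ∑ i, ((prodNatEquivNatProd (m i, t i)).2 : ℤ) =
      ∑ i, |m i| + 2 * ∑ i, (t i : ℤ) := by
  rw [← Finset.sum_add_distrib, Finset.mul_sum, ← Finset.sum_add_distrib]
  exact Finset.sum_congr rfl fun i _ => prodNatEquivNatProd_add (m i, t i)

end Int

section

variable {ι : Type*} [Fintype ι]

variable (ι) in
abbrev PosAbsSumSolutions (n : ℕ) : Type _ :=
  {p : ℤ × (ι → ℤ) × (ι → ℕ) //
    0 < p.1 ∧ p.1 + (∑ i, |p.2.1 i|) + 2 * (∑ i, (p.2.2 i : ℤ)) = (n : ℤ)}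

instance PosAbsSumSolutions.isEmpty_zero : IsEmpty (PosAbsSumSolutions ι 0) := by
  refine ⟨fun ⟨⟨m₀, m, t⟩, hpos, hsum⟩ => ?_⟩
  have : 0 ≤ ∑ i, |m i| := Finset.sum_nonneg fun i _ => abs_nonneg (m i)
  have : 0 ≤ ∑ i, (t i : ℤ) := Finset.sum_nonneg fun i _ => Int.natCast_nonneg (t i)
  dsimp only at hpos hsum
  omega

open Int in
def PosAbsSumSolutions.equivSumEq (n : ℕ) :
    PosAbsSumSolutions ι (n + 1) ≃ {g : Option (ι ⊕ ι) → ℕ // ∑ o, g o = n} where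
  toFun p := ⟨fun o => o.elim (p.1.1 - 1).toNat <| Sum.elim
      (fun i => (prodNatEquivNatProd (p.1.2.1 i, p.1.2.2 i)).1)
      (fun i => (prodNatEquivNatProd (p.1.2.1 i, p.1.2.2 i)).2), by
    obtain ⟨⟨m₀, m, t⟩, hpos, hsum⟩ := p
    have := sum_prodNatEquivNatProd_add m t
    simp only [Option.elim, Sum.elim_inl, Sum.elim_inr, Fintype.sum_option,
      Fintype.sum_sum_type] at hpos hsum ⊢
    zify
    omega⟩
  invFun g := ⟨(g.1 none + 1,
      fun i => (prodNatEquivNatProd.symm (g.1 (some (.inl i)), g.1 (some (.inr i)))).1,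
      fun i => (prodNatEquivNatProd.symm (g.1 (some (.inl i)), g.1 (some (.inr i)))).2), by
    obtain ⟨g, hg⟩ := g
    have := sum_prodNatEquivNatProd_add
      (fun i => (prodNatEquivNatProd.symm (g (some (.inl i)), g (some (.inr i)))).1)
      (fun i => (prodNatEquivNatProd.symm (g (some (.inl i)), g (some (.inr i)))).2)
    simp only [Prod.mk.eta, Equiv.apply_symm_apply] at this
    rw [Fintype.sum_option, Fintype.sum_sum_type] at hg
    refine ⟨by positivity, ?_⟩
    zify at hg
    push_cast
    omega⟩
  left_inv := by
    rintro ⟨⟨m₀, m, t⟩, hpos, hsum⟩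
    ext <;> simp
    omega
  right_inv := by
    rintro ⟨g, hg⟩
    ext (_ | _ | _) <;> simp

theorem card_fun_sum_eq_choose (α : Type*) [Fintype α] (n : ℕ) :
    Nat.card {g : α → ℕ // ∑ a, g a = n} = (Fintype.card α + n - 1).choose n := by
  classical
  rw [← Nat.card_congr (Sym.equivNatSumOfFintype α n), Nat.card_eq_fintype_card,
    Sym.card_sym_eq_choose]

end

/-- The number of tuples `(m_1,m_2,…,m_{k+1},t_1,…,t_k)` with `m_1` a positive integer,
`m_2,…,m_{k+1} ∈ ℤ`, `t_1,…,t_k ∈ ℕ` and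
`m_1 + |m_2| + ⋯ + |m_{k+1}| + 2t_1 + ⋯ + 2t_k = n` is `binom(n + 2k - 1, 2k)`. -/
theorem card_solutions_pos_add_absSum_add_two_mul_sum (k : ℕ) (hk : 1 ≤ k) (n : ℕ) :
    Nat.card {p : ℤ × (Fin k → ℤ) × (Fin k → ℕ) //
        0 < p.1 ∧ p.1 + (∑ i, |p.2.1 i|) + 2 * (∑ i, (p.2.2 i : ℤ)) = (n : ℤ)} =
      Nat.choose (n + 2 * k - 1) (2 * k) := by
  rcases n with _ | n
  · rw [Nat.choose_eq_zero_of_lt (by omega)]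
    exact Nat.card_of_isEmpty (α := PosAbsSumSolutions (Fin k) 0)
  · have hcard : Fintype.card (Option (Fin k ⊕ Fin k)) = 2 * k + 1 := by
      simp only [Fintype.card_option, Fintype.card_sum, Fintype.card_fin, two_mul]
    rw [Nat.card_congr (PosAbsSumSolutions.equivSumEq n), card_fun_sum_eq_choose, hcard,
      show 2 * k + 1 + n - 1 = 2 * k + n by omega, show n + 1 + 2 * k - 1 = 2 * k + n by omega,
      Nat.choose_symm_add]
end

section
/- For every integer k ≥ 1, the following identity of formal power series in q holds: Σ_{n=1}^∞ η̄_{2k−1}(n) q^n = (1/(q;q)_∞) · Σ_{n=1}^∞ (−1)^{n−1} q^{n(3n−1)/2 + kn} / (1 − q^n)^{2k−1}. -/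
/-!
Write `N(≥m, n)` for the number of partitions of `n` with rank at least `m`. Summation by parts
turns `η̄_{2k-1}(n)` into `Σ_{m≥1} binom(m+k-2, 2k-2) N(≥m, n)`. Dyson's bijection (delete the
first column of a partition of `N` with `ℓ` parts and rank at most `m + 2`, and add a new largest
part `ℓ + m + 1`) gives `N(≥m, N+m+1) = p(N) - N(≥m+3, N)`, so the series
`F_m = (q;q)_∞ Σ_n N(≥m, n) q^n` satisfy `F_m = q^(m+1) (1 - F_(m+3))` for `m ≥ 1`. Iterating,
`F_m = Σ_{s≥1} (-1)^(s-1) q^(s(3s-1)/2 + ms)`, and summing over `m` against the binomial weights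
with `Σ_{m≥1} binom(m+k-2, 2k-2) q^(ms) = q^(ks) / (1-q^s)^(2k-1)` gives the identity.
Coefficients of `q^N` are compared in `ℤ⟦X⟧ ⧸ (X^(N+1))`, where all these sums become finite.
-/

open PowerSeries

/-- The rank of a partition: its largest part minus its number of parts. -/
def Nat.Partition.rank {n : ℕ} (p : n.Partition) : ℤ :=
  (p.parts.sup : ℤ) - (p.parts.card : ℤ)

/-- `N(m,n)`: the number of partitions of `n` with rank `m`. -/
noncomputable def rankCount (m : ℤ) (n : ℕ) : ℕ :=
  Nat.card {p : n.Partition // p.rank = m}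

/-- The symmetrized positive rank moment
`η̄_{2k-1}(n) = Σ_{m ≥ 1} binom(m + k - 1, 2k - 1)·N(m,n)` (the summation index `m : ℕ`
below stands for the rank `m + 1`). -/
noncomputable def etaBarOdd (k n : ℕ) : ℤ :=
  ∑' m : ℕ, Ring.choose ((m : ℤ) + (k : ℤ)) (2 * k - 1) * (rankCount ((m : ℤ) + 1) n : ℤ)

/-- The infinite product `(q;q)_∞ = ∏_{n≥1} (1 - q^n)` as a formal power series in
`ℤ⟦X⟧`: its `N`-th coefficient is the (stable) `N`-th coefficient of the partial products. -/
noncomputable def qPochhammerInf : PowerSeries ℤ :=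
  PowerSeries.mk fun N =>
    PowerSeries.coeff (R := ℤ) N (∏ n ∈ Finset.range (N + 1), (1 - PowerSeries.X ^ (n + 1)))

/-- The sum `Σ_{j≥0} f j` of a family of power series in which `f j` has `X`-order
greater than `j`, so each coefficient receives only finitely many contributions. -/
noncomputable def seriesSum (f : ℕ → PowerSeries ℤ) : PowerSeries ℤ :=
  PowerSeries.mk fun N => ∑ j ∈ Finset.range (N + 1), PowerSeries.coeff (R := ℤ) N (f j)

open Finset

lemma Multiset.sum_map_pred_filter_add_card {s : Multiset ℕ} (hs : ∀ x ∈ s, 0 < x) :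
    ((s.filter (1 < ·)).map (· - 1)).sum + s.card = s.sum := by
  induction s using Multiset.induction_on with
  | empty => simp
  | cons a s ih =>
    have ha := hs a (Multiset.mem_cons_self a s)
    have := ih fun x hx => hs x (Multiset.mem_cons_of_mem hx)
    rw [Multiset.filter_cons]
    split_ifs <;>
      simp only [Multiset.singleton_add, Multiset.zero_add, Multiset.map_cons, Multiset.sum_cons,
        Multiset.card_cons] <;>
      omega

namespace Nat.Partition

variable {n : ℕ}

lemma parts_ne_zero (p : n.Partition) (hn : n ≠ 0) : p.parts ≠ 0 := by
  rintro h
  exact hn (by simpa [h] using p.parts_sum.symm)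

lemma sup_parts_mem (p : n.Partition) (hn : n ≠ 0) : p.parts.sup ∈ p.parts := by
  obtain ⟨a, ha, hmax⟩ := Multiset.exists_max_image id (p.parts_ne_zero hn)
  rwa [le_antisymm (Multiset.sup_le.2 hmax) (Multiset.le_sup ha)]

lemma rank_lt_of_le {m : ℕ} (hm : 1 ≤ m) (hn : n ≤ m) (p : n.Partition) : p.rank < m := by
  rcases eq_or_ne n 0 with rfl | hn0
  · simp only [rank, partition_zero_parts, Multiset.sup_zero, Nat.bot_eq_zero,
      Multiset.card_zero]
    omega
  · have := Multiset.card_pos.2 (p.parts_ne_zero hn0)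
    have : p.parts.sup ≤ n := Multiset.sup_le.2 fun _ => le_of_mem_parts
    unfold rank
    omega

section Dyson

variable (m : ℕ) {N : ℕ}

def dysonMap (p : N.Partition) : (N + m + 1).Partition where
  parts := (p.parts.card + m + 1) ::ₘ (p.parts.filter (1 < ·)).map (· - 1)
  parts_pos hi := by
    rcases Multiset.mem_cons.1 hi with rfl | hi
    · omega
    · obtain ⟨x, hx, rfl⟩ := Multiset.mem_map.1 hi
      have := Multiset.of_mem_filter hx
      omega
  parts_sum := by
    have := Multiset.sum_map_pred_filter_add_card fun _ hx => p.parts_pos hx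
    have := p.parts_sum
    rw [Multiset.sum_cons]
    omega

lemma le_sup_of_le_rank {q : (N + m + 1).Partition} (hq : (m : ℤ) ≤ q.rank) :
    q.parts.card + m ≤ q.parts.sup := by
  unfold rank at hq
  omega

def dysonInv (q : (N + m + 1).Partition) (hq : (m : ℤ) ≤ q.rank) : N.Partition where
  parts := (q.parts.erase q.parts.sup).map (· + 1) +
    Multiset.replicate (q.parts.sup - m - q.parts.card) 1
  parts_pos hi := by
    rcases Multiset.mem_add.1 hi with hi | hi
    · obtain ⟨x, -, rfl⟩ := Multiset.mem_map.1 hi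
      omega
    · rw [Multiset.eq_of_mem_replicate hi]
      exact Nat.one_pos
  parts_sum := by
    have hmem := q.sup_parts_mem (by omega)
    have hsum := congrArg Multiset.sum (Multiset.cons_erase hmem)
    have hcard := congrArg Multiset.card (Multiset.cons_erase hmem)
    have := le_sup_of_le_rank m hq
    rw [Multiset.sum_cons, q.parts_sum] at hsum
    rw [Multiset.card_cons] at hcard
    simp only [Multiset.sum_add, Multiset.sum_map_add, Multiset.map_id', Multiset.map_const',
      Multiset.sum_replicate, smul_eq_mul, mul_one]
    omega

variable {m}

lemma sup_dysonMap {p : N.Partition} (hp : p.rank ≤ m + 2) :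
    (dysonMap m p).parts.sup = p.parts.card + m + 1 := by
  refine (Multiset.sup_cons _ _).trans (sup_eq_left.2 (Multiset.sup_le.2 fun b hb => ?_))
  obtain ⟨x, hx, rfl⟩ := Multiset.mem_map.1 hb
  have := Multiset.le_sup (Multiset.mem_of_mem_filter hx)
  unfold rank at hp
  omega

lemma le_rank_dysonMap {p : N.Partition} (hp : p.rank ≤ m + 2) :
    (m : ℤ) ≤ (dysonMap m p).rank := by
  have hcard : ((p.parts.filter (1 < ·)).map (· - 1)).card ≤ p.parts.card := by
    rw [Multiset.card_map]
    exact Multiset.card_le_card (Multiset.filter_le _ _)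
  unfold rank
  rw [sup_dysonMap hp]
  simp only [dysonMap, Multiset.card_cons]
  omega

lemma card_dysonInv {q : (N + m + 1).Partition} (hq : (m : ℤ) ≤ q.rank) :
    (dysonInv m q hq).parts.card = q.parts.sup - m - 1 := by
  have hcard := congrArg Multiset.card (Multiset.cons_erase (q.sup_parts_mem (by omega)))
  have := le_sup_of_le_rank m hq
  rw [Multiset.card_cons] at hcard
  simp only [dysonInv, Multiset.card_add, Multiset.card_map, Multiset.card_replicate]
  omega

lemma rank_dysonInv_le {q : (N + m + 1).Partition} (hq : (m : ℤ) ≤ q.rank) :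
    (dysonInv m q hq).rank ≤ m + 2 := by
  have hsup : (dysonInv m q hq).parts.sup ≤ q.parts.sup + 1 := by
    refine Multiset.sup_le.2 fun b hb => ?_
    rcases Multiset.mem_add.1 hb with hb | hb
    · obtain ⟨x, hx, rfl⟩ := Multiset.mem_map.1 hb
      exact Nat.succ_le_succ (Multiset.le_sup (Multiset.mem_of_mem_erase hx))
    · rw [Multiset.eq_of_mem_replicate hb]
      omega
  have := le_sup_of_le_rank m hq
  have := card_dysonInv hq
  unfold rank
  omega

lemma dysonInv_dysonMap {p : N.Partition} (hp : p.rank ≤ m + 2) :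
    dysonInv m (dysonMap m p) (le_rank_dysonMap hp) = p := by
  ext1
  have hones : p.parts.filter (¬ 1 < ·) =
      Multiset.replicate (p.parts.filter (¬ 1 < ·)).card 1 :=
    Multiset.eq_replicate_card.2 fun b hb => by
      have := p.parts_pos (Multiset.mem_of_mem_filter hb)
      have := Multiset.of_mem_filter hb
      omega
  have hcard := congrArg Multiset.card (Multiset.filter_add_not (1 < ·) p.parts)
  rw [Multiset.card_add] at hcard
  simp only [dysonInv, sup_dysonMap hp]
  simp only [dysonMap, Multiset.erase_cons_head, Multiset.card_cons, Multiset.card_map]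
  have hid : ∀ x ∈ p.parts.filter (1 < ·), ((· + 1) ∘ (· - 1)) x = x := fun x hx => by
    have := Multiset.of_mem_filter hx
    simp only [Function.comp_apply]
    omega
  rw [Multiset.map_map, Multiset.map_congr rfl hid, Multiset.map_id',
    show p.parts.card + m + 1 - m - ((p.parts.filter (1 < ·)).card + 1) =
      (p.parts.filter (¬ 1 < ·)).card by omega, ← hones, Multiset.filter_add_not]

lemma dysonMap_dysonInv {q : (N + m + 1).Partition} (hq : (m : ℤ) ≤ q.rank) :
    dysonMap m (dysonInv m q hq) = q := by
  ext1
  have hmem := q.sup_parts_mem (by omega)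
  have := le_sup_of_le_rank m hq
  have := Multiset.card_pos.2 (q.parts_ne_zero (by omega))
  have hfilter : ((q.parts.erase q.parts.sup).map (· + 1) +
      Multiset.replicate (q.parts.sup - m - q.parts.card) 1).filter (1 < ·) =
      (q.parts.erase q.parts.sup).map (· + 1) := by
    rw [Multiset.filter_add, Multiset.filter_eq_self.2, Multiset.filter_eq_nil.2, add_zero]
    · intro a ha
      rw [Multiset.eq_of_mem_replicate ha]
      exact lt_irrefl 1
    · intro a ha
      obtain ⟨x, hx, rfl⟩ := Multiset.mem_map.1 ha
      have := q.parts_pos (Multiset.mem_of_mem_erase hx)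
      omega
  simp only [dysonMap]
  rw [card_dysonInv hq, show q.parts.sup - m - 1 + m + 1 = q.parts.sup by omega]
  simp only [dysonInv]
  rw [hfilter, Multiset.map_map]
  simp only [Function.comp_def, Nat.add_sub_cancel, Multiset.map_id', Multiset.cons_erase hmem]

end Dyson

def dysonEquiv (m N : ℕ) :
    {p : N.Partition // p.rank ≤ m + 2} ≃ {q : (N + m + 1).Partition // m ≤ q.rank} where
  toFun p := ⟨dysonMap m p, le_rank_dysonMap p.2⟩
  invFun q := ⟨dysonInv m q q.2, rank_dysonInv_le q.2⟩
  left_inv p := Subtype.ext (dysonInv_dysonMap p.2)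
  right_inv q := Subtype.ext (dysonMap_dysonInv q.2)

end Nat.Partition

noncomputable def rankGeCount (m n : ℕ) : ℕ := #{p : n.Partition | (m : ℤ) ≤ p.rank}

lemma rankGeCount_eq_zero {m n : ℕ} (hm : 1 ≤ m) (hn : n ≤ m) : rankGeCount m n = 0 := by
  simp [rankGeCount, filter_eq_empty_iff, Nat.Partition.rank_lt_of_le hm hn]

lemma rankGeCount_eq_rankCount_add (m n : ℕ) :
    rankGeCount m n = rankCount m n + rankGeCount (m + 1) n := by
  rw [rankCount, Nat.card_eq_fintype_card, Fintype.card_subtype, rankGeCount, rankGeCount,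
    ← card_union_of_disjoint (disjoint_filter.2 fun p _ h => by push_cast; omega)]
  congr 1
  ext p
  simp only [mem_filter, mem_union, mem_univ, true_and]
  push_cast
  omega

lemma rankGeCount_add_rankGeCount (m N : ℕ) :
    rankGeCount m (N + m + 1) + rankGeCount (m + 3) N = Fintype.card N.Partition := by
  have hdyson : rankGeCount m (N + m + 1) = #{p : N.Partition | p.rank ≤ m + 2} := by
    rw [rankGeCount, ← Fintype.card_subtype, ← Fintype.card_subtype,
      Fintype.card_congr (Nat.Partition.dysonEquiv m N)]
  rw [hdyson, rankGeCount, ← card_univ, ← card_filter_add_card_filter_not (s := univ)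
    (fun p : N.Partition => p.rank ≤ m + 2)]
  congr 2
  ext p
  simp only [mem_filter, mem_univ, true_and, not_le]
  push_cast
  omega

lemma sum_range_mul_sub_succ {R : Type*} [CommRing R] (a b : ℕ → R) (M : ℕ) :
    ∑ m ∈ range M, a (m + 1) * (b m - b (m + 1)) =
      ∑ m ∈ range M, (a (m + 1) - a m) * b m + a 0 * b 0 - a M * b M := by
  induction M with
  | zero => simp
  | succ M ih =>
    rw [sum_range_succ, sum_range_succ, ih]
    ring

lemma etaBarOdd_eq_sum_rankCount (k n M : ℕ) (hM : n ≤ M) :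
    etaBarOdd k n = ∑ m ∈ range M, ((m + k).choose (2 * k - 1) : ℤ) * rankCount (m + 1) n := by
  rw [etaBarOdd, tsum_eq_sum fun m hm => ?_]
  · refine sum_congr rfl fun m _ => ?_
    rw [← Ring.choose_natCast]
    push_cast
    rfl
  · have : rankCount (m + 1) n ≤ rankGeCount (m + 1) n := by
      rw [rankGeCount_eq_rankCount_add]
      push_cast
      omega
    rw [mem_range, not_lt] at hm
    rw [rankGeCount_eq_zero (by omega) (by omega), Nat.le_zero] at this
    rw [this, Nat.cast_zero, mul_zero]

lemma etaBarOdd_succ_eq_sum_rankGeCount (k n M : ℕ) (hM : n ≤ M) :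
    etaBarOdd (k + 1) n =
      ∑ m ∈ range M, ((m + k).choose (2 * k) : ℤ) * rankGeCount (m + 1) n := by
  set a : ℕ → ℤ := fun m => (m + k).choose (2 * k + 1)
  set b : ℕ → ℤ := fun m => rankGeCount (m + 1) n
  have ha : a 0 = 0 := by simp [a, Nat.choose_eq_zero_of_lt (show k < 2 * k + 1 by omega)]
  have hb : b M = 0 := by
    simp [b, rankGeCount_eq_zero (show 1 ≤ M + 1 by omega) (show n ≤ M + 1 by omega)]
  calc etaBarOdd (k + 1) n = ∑ m ∈ range M, a (m + 1) * (b m - b (m + 1)) := by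
        rw [etaBarOdd_eq_sum_rankCount _ n M hM]
        refine sum_congr rfl fun m _ => ?_
        have := congrArg (Nat.cast : ℕ → ℤ) (rankGeCount_eq_rankCount_add (m + 1) n)
        push_cast at this
        simp only [a, b, show 2 * (k + 1) - 1 = 2 * k + 1 by omega,
          show m + (k + 1) = m + 1 + k by ring]
        linear_combination -(((m + 1 + k).choose (2 * k + 1) : ℕ) : ℤ) * this
    _ = ∑ m ∈ range M, (a (m + 1) - a m) * b m := by
        rw [sum_range_mul_sub_succ, ha, hb]
        ring
    _ = _ := by
        refine sum_congr rfl fun m _ => ?_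
        simp only [a, b, show m + 1 + k = m + k + 1 by ring, Nat.choose_succ_succ']
        push_cast
        ring

lemma natCast_pentagonal_add_one (k : ℤ) :
    (pentagonal (k + 1) : ℤ) = pentagonal k + 3 * k + 1 := by
  have : 2 * ((pentagonal (k + 1) : ℤ) - (pentagonal k + 3 * k + 1)) = 0 := by
    linear_combination two_mul_natCast_pentagonal (k + 1) - two_mul_natCast_pentagonal k
  omega

lemma pentagonal_natCast (s : ℕ) : pentagonal s = s * (3 * s - 1) / 2 := by
  refine (Nat.div_eq_of_eq_mul_left two_pos ?_).symm
  have := two_mul_natCast_pentagonal s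
  rcases s with _ | s
  · simp [pentagonal]
  · zify [show 1 ≤ 3 * (s + 1) by omega]
    push_cast at this ⊢
    linear_combination -this

section PowerSeries

variable {R : Type*} [CommRing R]

lemma coeff_eq_of_mk_eq {N : ℕ} {f g : R⟦X⟧}
    (h : Ideal.Quotient.mk (Ideal.span {X ^ (N + 1)}) f = Ideal.Quotient.mk _ g) :
    coeff N f = coeff N g := by
  rw [Ideal.Quotient.eq, Ideal.mem_span_singleton, X_pow_dvd_iff] at h
  exact sub_eq_zero.1 (map_sub (coeff N) f g ▸ h N N.lt_succ_self)

lemma mk_X_pow_eq_zero {N e : ℕ} (h : N < e) :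
    Ideal.Quotient.mk (Ideal.span {(X : R⟦X⟧) ^ (N + 1)}) (X ^ e) = 0 := by
  rw [Ideal.Quotient.eq_zero_iff_mem, Ideal.mem_span_singleton]
  exact pow_dvd_pow X h

lemma coeff_prod_one_sub_X_pow_of_subset {N : ℕ} {s : Finset ℕ} (h : range (N + 1) ⊆ s) :
    coeff N (∏ i ∈ s, (1 - X ^ (i + 1) : R⟦X⟧)) =
      coeff N (∏ i ∈ range (N + 1), (1 - X ^ (i + 1) : R⟦X⟧)) := by
  apply coeff_eq_of_mk_eq
  rw [← prod_sdiff h, map_mul, map_prod, prod_eq_one, one_mul]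
  intro i hi
  rw [map_sub, map_one, mk_X_pow_eq_zero (by rw [mem_sdiff, mem_range] at hi; omega), sub_zero]

lemma eq_sum_add_of_forall_eq_X_pow_mul {F : ℕ → R⟦X⟧}
    (hF : ∀ m, 1 ≤ m → F m = X ^ (m + 1) * (1 - F (m + 3))) (J : ℕ) {m : ℕ} (hm : 1 ≤ m) :
    F m = ∑ j ∈ range J, (-1) ^ j * X ^ (pentagonal (j + 1 : ℕ) + m * (j + 1)) +
      (-1) ^ J * X ^ (pentagonal J + m * J) * F (m + 3 * J) := by
  induction J generalizing m with
  | zero => simp [pentagonal]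
  | succ J ih =>
    have hexp (j : ℕ) : pentagonal (j + 1 : ℕ) + m * (j + 1) =
        m + 1 + (pentagonal j + (m + 3) * j) := by
      have := natCast_pentagonal_add_one j
      zify
      linear_combination this
    have hsum : ∑ j ∈ range J, (-1 : R⟦X⟧) ^ (j + 1) *
        X ^ (m + 1 + (pentagonal (j + 1 : ℕ) + (m + 3) * (j + 1))) =
        -(X ^ (m + 1) *
          ∑ j ∈ range J, (-1) ^ j * X ^ (pentagonal (j + 1 : ℕ) + (m + 3) * (j + 1))) := by
      rw [mul_sum, ← sum_neg_distrib]
      exact sum_congr rfl fun j _ => by ring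
    rw [hF m hm, ih (by omega), sum_range_succ']
    simp only [hexp, hsum, show m + 3 + 3 * J = m + 3 * (J + 1) by ring, Nat.cast_zero,
      show pentagonal 0 = 0 from rfl]
    ring

lemma inverse_one_sub_X_pow_pow {s : ℕ} (hs : s ≠ 0) (d : ℕ) :
    Ring.inverse ((1 - X ^ s : R⟦X⟧) ^ d) = expand s hs (invOneSubPow R d) := by
  have hmul : (1 - X ^ s : R⟦X⟧) ^ d * expand s hs (invOneSubPow R d) = 1 := by
    have hexpand : (1 - X ^ s : R⟦X⟧) ^ d = expand s hs (invOneSubPow R d).inv := by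
      rw [invOneSubPow_inv_eq_one_sub_pow]
      simp
    rw [hexpand, ← map_mul, (invOneSubPow R d).inv_val, map_one]
  calc Ring.inverse ((1 - X ^ s : R⟦X⟧) ^ d)
      = Ring.inverse ((1 - X ^ s : R⟦X⟧) ^ d) *
          ((1 - X ^ s) ^ d * expand s hs (invOneSubPow R d)) := by
        rw [hmul, mul_one]
    _ = expand s hs (invOneSubPow R d) :=
        Ring.inverse_mul_cancel_left _ _ (IsUnit.of_mul_eq_one _ hmul)

lemma mk_sum_choose_mul_X_pow (k : ℕ) {s : ℕ} (hs : s ≠ 0) (N : ℕ) :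
    Ideal.Quotient.mk (Ideal.span {X ^ (N + 1)})
        (∑ m ∈ range (k + (N + 1)), C ((m + k).choose (2 * k) : R) * X ^ ((m + 1) * s)) =
      Ideal.Quotient.mk _ (X ^ ((k + 1) * s) * expand s hs (invOneSubPow R (2 * k + 1))) := by
  obtain ⟨g, hg⟩ : ∃ g, (invOneSubPow R (2 * k + 1) : R⟦X⟧) =
      X ^ (N + 1) * g + ∑ t ∈ range (N + 1), C ((2 * k + t).choose (2 * k) : R) * X ^ t := by
    refine ⟨mk fun i => coeff (i + (N + 1)) (invOneSubPow R (2 * k + 1) : R⟦X⟧),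
      (eq_X_pow_mul_shift_add_trunc (N + 1) _).trans ?_⟩
    rw [← Polynomial.eval₂_C_X_eq_coe, eval₂_trunc_eq_sum_range,
      invOneSubPow_val_succ_eq_mk_add_choose]
    simp only [coeff_mk]
  have hlow : ∀ m ∈ range k, C ((m + k).choose (2 * k) : R) * (X : R⟦X⟧) ^ ((m + 1) * s) = 0 :=
    fun m hm => by
      rw [Nat.choose_eq_zero_of_lt (by rw [mem_range] at hm; omega), Nat.cast_zero, map_zero,
        zero_mul]
  have key : X ^ ((k + 1) * s) * expand s hs (invOneSubPow R (2 * k + 1)) =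
      X ^ ((k + 1) * s + s * (N + 1)) * expand s hs g +
        ∑ m ∈ range (k + (N + 1)), C ((m + k).choose (2 * k) : R) * X ^ ((m + 1) * s) := by
    rw [sum_range_add _ k, sum_eq_zero hlow, zero_add, hg, map_add, map_mul, map_pow, expand_X,
      map_sum, mul_add, mul_sum, pow_add, pow_mul]
    congr 1
    · ring
    · refine sum_congr rfl fun t _ => ?_
      rw [map_mul, expand_C, map_pow, expand_X, show k + t + k = 2 * k + t by ring]
      ring
  have hN : N < (k + 1) * s + s * (N + 1) := by nlinarith [Nat.one_le_iff_ne_zero.2 hs]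
  rw [key, map_add, map_mul, mk_X_pow_eq_zero hN, zero_mul, zero_add]

end PowerSeries

open scoped PowerSeries.WithPiTopology

noncomputable def partitionGF : ℤ⟦X⟧ := mk fun n => (Fintype.card n.Partition : ℤ)

lemma hasProd_qPochhammerInf : HasProd (fun i => (1 - X ^ (i + 1) : ℤ⟦X⟧)) qPochhammerInf := by
  rw [HasProd, WithPiTopology.tendsto_iff_coeff_tendsto]
  refine fun N => tendsto_nhds_of_eventually_eq ?_
  filter_upwards [Filter.eventually_ge_atTop (range (N + 1))] with s hs
  rw [coeff_prod_one_sub_X_pow_of_subset hs, qPochhammerInf, coeff_mk]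

lemma hasProd_partitionGF : HasProd (fun i => ∑' j, (X : ℤ⟦X⟧) ^ ((i + 1) * j)) partitionGF := by
  simpa [Nat.Partition.restricted, partitionGF] using
    Nat.Partition.hasProd_powerSeriesMk_card_restricted ℤ fun _ => True

lemma qPochhammerInf_mul_partitionGF : qPochhammerInf * partitionGF = 1 := by
  refine (hasProd_qPochhammerInf.mul hasProd_partitionGF).unique ?_
  convert hasProd_one with i
  simp_rw [pow_mul]
  exact WithPiTopology.one_sub_mul_tsum_pow_of_constantCoeff_eq_zero (by simp)

noncomputable def rankGeGF (m : ℕ) : ℤ⟦X⟧ := mk fun n => (rankGeCount m n : ℤ)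

lemma rankGeGF_eq {m : ℕ} (hm : 1 ≤ m) :
    rankGeGF m = X ^ (m + 1) * (partitionGF - rankGeGF (m + 3)) := by
  ext n
  rw [coeff_X_pow_mul', rankGeGF, coeff_mk]
  split_ifs with h
  · obtain ⟨N, rfl⟩ := Nat.exists_eq_add_of_le' h
    have := rankGeCount_add_rankGeCount m N
    rw [Nat.add_sub_cancel, map_sub, partitionGF, rankGeGF, coeff_mk, coeff_mk, ← this,
      ← add_assoc]
    push_cast
    ring
  · rw [rankGeCount_eq_zero hm (by omega), Nat.cast_zero]

lemma qPochhammerInf_mul_rankGeGF {m : ℕ} (hm : 1 ≤ m) :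
    qPochhammerInf * rankGeGF m = X ^ (m + 1) * (1 - qPochhammerInf * rankGeGF (m + 3)) := by
  rw [rankGeGF_eq hm, ← qPochhammerInf_mul_partitionGF]
  ring

lemma mk_qPochhammerInf_mul_rankGeGF {m : ℕ} (hm : 1 ≤ m) (N : ℕ) :
    Ideal.Quotient.mk (Ideal.span {X ^ (N + 1)}) (qPochhammerInf * rankGeGF m) =
      Ideal.Quotient.mk _
        (∑ j ∈ range (N + 1), (-1) ^ j * X ^ (pentagonal (j + 1 : ℕ) + m * (j + 1))) := by
  have hN : N < pentagonal (N + 1 : ℕ) + m * (N + 1) := by nlinarith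
  rw [eq_sum_add_of_forall_eq_X_pow_mul (fun _ => qPochhammerInf_mul_rankGeGF) (N + 1) hm,
    map_add, map_mul, map_mul, mk_X_pow_eq_zero hN, mul_zero, zero_mul, add_zero]

lemma mk_etaBarOdd_succ (k : ℕ) {N M : ℕ} (hM : N ≤ M) :
    Ideal.Quotient.mk (Ideal.span {X ^ (N + 1)}) (mk fun n => etaBarOdd (k + 1) n) =
      Ideal.Quotient.mk _
        (∑ m ∈ range M, C ((m + k).choose (2 * k) : ℤ) * rankGeGF (m + 1)) := by
  rw [Ideal.Quotient.eq, Ideal.mem_span_singleton, X_pow_dvd_iff]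
  intro n hn
  rw [map_sub, map_sum, coeff_mk, etaBarOdd_succ_eq_sum_rankGeCount k n M (by omega), sub_eq_zero]
  simp only [coeff_C_mul, rankGeGF, coeff_mk]

lemma mk_qPochhammerInf_mul_etaBarOdd_succ (k N : ℕ) :
    Ideal.Quotient.mk (Ideal.span {X ^ (N + 1)})
        (qPochhammerInf * PowerSeries.mk fun n => etaBarOdd (k + 1) n) =
      Ideal.Quotient.mk _ (∑ j ∈ range (N + 1), (-1) ^ j * X ^ pentagonal (j + 1 : ℕ) *
        (X ^ ((k + 1) * (j + 1)) *
          expand (j + 1) j.succ_ne_zero (invOneSubPow ℤ (2 * k + 1)))) := by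
  calc _ = Ideal.Quotient.mk _ (∑ m ∈ range (k + (N + 1)),
          C ((m + k).choose (2 * k) : ℤ) * (qPochhammerInf * rankGeGF (m + 1))) := by
        rw [map_mul, mk_etaBarOdd_succ k (show N ≤ k + (N + 1) by omega), ← map_mul, mul_sum]
        simp_rw [mul_left_comm]
    _ = Ideal.Quotient.mk _ (∑ m ∈ range (k + (N + 1)), C ((m + k).choose (2 * k) : ℤ) *
          ∑ j ∈ range (N + 1), (-1) ^ j * X ^ (pentagonal (j + 1 : ℕ) + (m + 1) * (j + 1))) := by
        simp only [map_sum, map_mul, mk_qPochhammerInf_mul_rankGeGF (Nat.le_add_left 1 _)]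
    _ = Ideal.Quotient.mk _ (∑ j ∈ range (N + 1), (-1) ^ j * X ^ pentagonal (j + 1 : ℕ) *
          ∑ m ∈ range (k + (N + 1)), C ((m + k).choose (2 * k) : ℤ) * X ^ ((m + 1) * (j + 1))) := by
        simp_rw [mul_sum]
        rw [sum_comm]
        exact congrArg _ (sum_congr rfl fun j _ => sum_congr rfl fun m _ => by ring)
    _ = _ := by
        simp only [map_sum]
        refine sum_congr rfl fun j _ => ?_
        rw [map_mul, mk_sum_choose_mul_X_pow, ← map_mul]

/-- `Σ_{n≥1} η̄_{2k-1}(n) q^n = (q;q)_∞⁻¹ · Σ_{n≥1} (-1)^(n-1)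
q^(n(3n-1)/2 + kn) / (1-q^n)^(2k-1)` for `k ≥ 1` (the summation index `j : ℕ` below stands
for `n = j + 1`; the coefficient of `q^0` on the left vanishes since `η̄_{2k-1}(0) = 0`). -/
theorem etaBarOdd_generating_function (k : ℕ) (hk : 1 ≤ k) :
    (PowerSeries.mk fun n => etaBarOdd k n) =
      Ring.inverse qPochhammerInf *
        seriesSum (fun j =>
          ((-1 : ℤ) ^ j) •
            (PowerSeries.X ^ ((j + 1) * (3 * (j + 1) - 1) / 2 + k * (j + 1)) *
              Ring.inverse ((1 - PowerSeries.X ^ (j + 1)) ^ (2 * k - 1)))) := by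
  obtain ⟨k, rfl⟩ := Nat.exists_eq_add_of_le' hk
  rw [← Ring.inverse_mul_cancel_left _ (PowerSeries.mk fun n => etaBarOdd (k + 1) n)
    (IsUnit.of_mul_eq_one _ qPochhammerInf_mul_partitionGF)]
  congr 1
  ext N
  rw [seriesSum, coeff_mk, ← map_sum]
  refine coeff_eq_of_mk_eq ((mk_qPochhammerInf_mul_etaBarOdd_succ k N).trans
    (congrArg _ (sum_congr rfl fun j _ => ?_)))
  rw [inverse_one_sub_X_pow_pow j.succ_ne_zero, zsmul_eq_mul, pentagonal_natCast,
    show 2 * (k + 1) - 1 = 2 * k + 1 by omega]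
  push_cast
  ring
end
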